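/- arXiv:1501.02415 — 2 statements merged into one kernel-verified Lean document; each statement's English description precedes it below -/
import Mathlib

section
/- Let p, q, α > 1 with 1/p + 1/q = 1, and let β, β̄ > 1 satisfy β > pα + 1, β̄ > qα + 1 and pα ≥ 2, qα ≥ 2. Suppose ξ has the folded t density f(x) = (2Γ(β/2)/(Γ((β−1)/2)√((β−1)π))) (1 + x²/(β−1))^{−β/2} for x > 0, ξ̄ has the folded t density with parameter β̄, and ξ, ξ̄ are independent. Then E[ξ²] < ∞, E[ξ̄²] < ∞, and sup_{t≥0} t^α P(ξ ξ̄ > t) < ∞. -/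
/-!
Both tails are polynomial: the folded `t` density with parameter `β` decays like `x ^ (-β)`, so
`E |ξ| ^ r < ∞` for every `r < β - 1`; in particular `ξ` and `ξ̄` have finite second and `α`-th
moments. By independence `E |ξ ξ̄| ^ α = E |ξ| ^ α · E |ξ̄| ^ α < ∞`, and Markov's inequality for
`|ξ ξ̄| ^ α` gives `t ^ α P(ξ ξ̄ > t) ≤ E |ξ| ^ α · E |ξ̄| ^ α` for all `t ≥ 0`.
-/

open MeasureTheory ProbabilityTheory Real

noncomputable section

def foldedTNormConst (β : ℝ) : ℝ :=
  2 * Gamma (β / 2) / (Gamma ((β - 1) / 2) * sqrt ((β - 1) * π))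

def foldedTPDFReal (β x : ℝ) : ℝ :=
  if 0 < x then foldedTNormConst β * (1 + x ^ 2 / (β - 1)) ^ (-(β / 2)) else 0

end

lemma foldedTNormConst_nonneg {β : ℝ} (hβ : 1 < β) : 0 ≤ foldedTNormConst β := by
  have := Gamma_pos_of_pos (show 0 < β / 2 by linarith)
  have := Gamma_pos_of_pos (show 0 < (β - 1) / 2 by linarith)
  unfold foldedTNormConst
  positivity

lemma foldedTPDFReal_le {β : ℝ} (hβ : 1 < β) (x : ℝ) :
    foldedTPDFReal β x ≤ foldedTNormConst β * (1 + x ^ 2 / (β - 1)) ^ (-(β / 2)) := by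
  unfold foldedTPDFReal
  split_ifs
  · rfl
  · have := foldedTNormConst_nonneg hβ
    positivity

lemma abs_rpow_le_mul_one_add_sq_div_rpow {s r : ℝ} (hs : 0 < s) (hr : 0 ≤ r) (x : ℝ) :
    |x| ^ r ≤ s ^ (r / 2) * (1 + x ^ 2 / s) ^ (r / 2) := by
  calc |x| ^ r = (x ^ 2) ^ (r / 2) := by
        rw [← sq_abs, ← rpow_natCast, ← rpow_mul (abs_nonneg x)]
        ring_nf
    _ ≤ (s * (1 + x ^ 2 / s)) ^ (r / 2) := by
        gcongr
        rw [mul_one_add, mul_div_cancel₀ _ hs.ne']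
        linarith
    _ = s ^ (r / 2) * (1 + x ^ 2 / s) ^ (r / 2) := mul_rpow hs.le (by positivity)

lemma integrable_one_add_sq_div_rpow_neg {s r : ℝ} (hs : 0 < s) (hr : 1 < r) :
    Integrable fun x : ℝ => (1 + x ^ 2 / s) ^ (-r / 2) := by
  have h := (integrable_rpow_neg_one_add_norm_sq (E := ℝ) (μ := volume)
    (by simpa using hr)).comp_div (sqrt_pos.2 hs).ne'
  refine h.congr (ae_of_all _ fun x => ?_)
  simp [div_pow, sq_sqrt hs.le]

lemma integrable_abs_rpow_mul_one_add_sq_div_rpow_neg {s r β : ℝ} (hs : 0 < s) (hr : 0 ≤ r)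
    (hrβ : r + 1 < β) :
    Integrable fun x : ℝ => |x| ^ r * (1 + x ^ 2 / s) ^ (-(β / 2)) := by
  refine ((integrable_one_add_sq_div_rpow_neg hs (r := β - r) (by linarith)).const_mul
    (s ^ (r / 2))).mono' (by fun_prop) (ae_of_all _ fun x => ?_)
  have hpos : 0 < 1 + x ^ 2 / s := by positivity
  rw [norm_of_nonneg (by positivity)]
  calc |x| ^ r * (1 + x ^ 2 / s) ^ (-(β / 2))
      ≤ s ^ (r / 2) * (1 + x ^ 2 / s) ^ (r / 2) * (1 + x ^ 2 / s) ^ (-(β / 2)) := by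
        gcongr
        exact abs_rpow_le_mul_one_add_sq_div_rpow hs hr x
    _ = s ^ (r / 2) * (1 + x ^ 2 / s) ^ (-(β - r) / 2) := by
        rw [mul_assoc, ← rpow_add hpos]
        ring_nf

lemma integrable_abs_rpow_foldedT {β r : ℝ} (hβ : 1 < β) (hr : 0 ≤ r) (hrβ : r < β - 1) :
    Integrable (fun x : ℝ => |x| ^ r)
      (volume.withDensity fun x => ENNReal.ofReal (foldedTPDFReal β x)) := by
  have hmeas : Measurable (foldedTPDFReal β) := by
    unfold foldedTPDFReal
    exact Measurable.ite measurableSet_Ioi (by fun_prop) measurable_const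
  rw [integrable_withDensity_iff hmeas.ennreal_ofReal (ae_of_all _ fun _ => ENNReal.ofReal_lt_top)]
  refine ((integrable_abs_rpow_mul_one_add_sq_div_rpow_neg (β := β) (sub_pos.2 hβ) hr
    (by linarith)).const_mul (foldedTNormConst β)).mono' (by fun_prop) (ae_of_all _ fun x => ?_)
  rw [norm_of_nonneg (by positivity), ENNReal.toReal_ofReal', mul_left_comm]
  gcongr
  exact max_le (foldedTPDFReal_le hβ x) (by have := foldedTNormConst_nonneg hβ; positivity)

section

variable {Ω : Type*} [MeasurableSpace Ω] {μ : Measure Ω}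

lemma integrable_abs_rpow_of_map_eq_foldedT {ξ : Ω → ℝ} {β r : ℝ} (hξ : Measurable ξ)
    (hlaw : μ.map ξ = volume.withDensity fun x => ENNReal.ofReal (foldedTPDFReal β x))
    (hβ : 1 < β) (hr : 0 ≤ r) (hrβ : r < β - 1) :
    Integrable (fun ω => |ξ ω| ^ r) μ := by
  have h := integrable_abs_rpow_foldedT hβ hr hrβ
  rw [← hlaw] at h
  exact h.comp_measurable hξ

lemma rpow_mul_measureReal_lt_le_integral [IsFiniteMeasure μ] {f : Ω → ℝ} {α t : ℝ}
    (hf : Integrable (fun ω => |f ω| ^ α) μ) (hα : 0 ≤ α) (ht : 0 ≤ t) :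
    t ^ α * μ.real {ω | t < f ω} ≤ ∫ ω, |f ω| ^ α ∂μ :=
  calc t ^ α * μ.real {ω | t < f ω} ≤ t ^ α * μ.real {ω | t ^ α ≤ |f ω| ^ α} :=
        mul_le_mul_of_nonneg_left (measureReal_mono fun ω (hω : t < f ω) =>
          rpow_le_rpow ht (hω.le.trans (le_abs_self _)) hα) (by positivity)
    _ ≤ ∫ ω, |f ω| ^ α ∂μ :=
        mul_meas_ge_le_integral_of_nonneg (ae_of_all _ fun ω => by positivity) hf _

lemma ProbabilityTheory.IndepFun.rpow_mul_measureReal_mul_lt_le [IsFiniteMeasure μ]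
    {X Y : Ω → ℝ} {α t : ℝ}
    (hXY : IndepFun X Y μ) (hX : Measurable X) (hY : Measurable Y)
    (hXα : Integrable (fun ω => |X ω| ^ α) μ) (hYα : Integrable (fun ω => |Y ω| ^ α) μ)
    (hα : 0 ≤ α) (ht : 0 ≤ t) :
    t ^ α * μ.real {ω | t < X ω * Y ω} ≤
      (∫ ω, |X ω| ^ α ∂μ) * ∫ ω, |Y ω| ^ α ∂μ := by
  have habs : (fun ω => |X ω * Y ω| ^ α) = fun ω => |X ω| ^ α * |Y ω| ^ α := by
    ext ω
    rw [abs_mul, mul_rpow (abs_nonneg _) (abs_nonneg _)]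
  have hm : Measurable fun x : ℝ => |x| ^ α := by fun_prop
  have hint : Integrable (fun ω => |X ω * Y ω| ^ α) μ := by
    rw [habs]
    exact (hXY.comp hm hm).integrable_mul hXα hYα
  calc t ^ α * μ.real {ω | t < X ω * Y ω} ≤ ∫ ω, |X ω * Y ω| ^ α ∂μ :=
        rpow_mul_measureReal_lt_le_integral hint hα ht
    _ = _ := by
        rw [habs]
        exact hXY.integral_fun_comp_mul_comp hX.aemeasurable hY.aemeasurable
          hm.aestronglyMeasurable hm.aestronglyMeasurable

end

theorem folded_t_product_tail_bound_general
    {Ω : Type*} [MeasurableSpace Ω] (μ : Measure Ω) [IsProbabilityMeasure μ]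
    (p q α β βb : ℝ)
    (hp : 1 < p) (hq : 1 < q) (hα : 1 < α)
    (hβ1 : 1 < β) (hβb1 : 1 < βb)
    (hβ : p * α + 1 < β) (hβb : q * α + 1 < βb)
    (hpα : 2 ≤ p * α) (hqα : 2 ≤ q * α)
    (ξ ξb : Ω → ℝ) (hmξ : Measurable ξ) (hmξb : Measurable ξb)
    (hlaw : μ.map ξ = volume.withDensity fun x : ℝ =>
      ENNReal.ofReal
        (if 0 < x then
          2 * Real.Gamma (β / 2) /
              (Real.Gamma ((β - 1) / 2) * Real.sqrt ((β - 1) * Real.pi)) *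
            (1 + x ^ 2 / (β - 1)) ^ (-(β / 2))
        else 0))
    (hlawb : μ.map ξb = volume.withDensity fun x : ℝ =>
      ENNReal.ofReal
        (if 0 < x then
          2 * Real.Gamma (βb / 2) /
              (Real.Gamma ((βb - 1) / 2) * Real.sqrt ((βb - 1) * Real.pi)) *
            (1 + x ^ 2 / (βb - 1)) ^ (-(βb / 2))
        else 0))
    (hindep : IndepFun ξ ξb μ) :
    Integrable (fun ω => (ξ ω) ^ 2) μ ∧ Integrable (fun ω => (ξb ω) ^ 2) μ ∧
      ∃ M : ℝ, ∀ t : ℝ, 0 ≤ t → t ^ α * (μ {ω | t < ξ ω * ξb ω}).toReal ≤ M := by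
  -- `hlaw`, `hlawb` are `foldedTPDFReal` laws with the definition unfolded.
  have hmoment (r : ℝ) (hr : 0 ≤ r) (hrβ : r < β - 1) : Integrable (fun ω => |ξ ω| ^ r) μ :=
    integrable_abs_rpow_of_map_eq_foldedT (β := β) hmξ hlaw hβ1 hr hrβ
  have hmomentb (r : ℝ) (hr : 0 ≤ r) (hrβ : r < βb - 1) : Integrable (fun ω => |ξb ω| ^ r) μ :=
    integrable_abs_rpow_of_map_eq_foldedT (β := βb) hmξb hlawb hβb1 hr hrβ
  refine ⟨by simpa only [rpow_two, sq_abs] using hmoment 2 zero_le_two (by linarith),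
    by simpa only [rpow_two, sq_abs] using hmomentb 2 zero_le_two (by linarith),
    _, fun t ht => hindep.rpow_mul_measureReal_mul_lt_le hmξ hmξb
      (hmoment α (by linarith) (by nlinarith)) (hmomentb α (by linarith) (by nlinarith))
      (by linarith) ht⟩

/-- **Folded t example.**  If `ξ ~ Ft(β)` and `ξ̄ ~ Ft(β̄)` are independent
folded-t random variables with `β > pα + 1`, `β̄ > qα + 1`, `pα, qα ≥ 2`,
`1/p + 1/q = 1` and `p, q, α > 1`, then `E[ξ²] < ∞`, `E[ξ̄²] < ∞` and
`sup_{t≥0} t^α P(ξ ξ̄ > t) < ∞`. -/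
theorem folded_t_product_tail_bound
    {Ω : Type*} [MeasurableSpace Ω] (μ : Measure Ω) [IsProbabilityMeasure μ]
    (p q α β βb : ℝ)
    (hp : 1 < p) (hq : 1 < q) (hα : 1 < α) (hpq : 1 / p + 1 / q = 1)
    (hβ1 : 1 < β) (hβb1 : 1 < βb)
    (hβ : p * α + 1 < β) (hβb : q * α + 1 < βb)
    (hpα : 2 ≤ p * α) (hqα : 2 ≤ q * α)
    (ξ ξb : Ω → ℝ) (hmξ : Measurable ξ) (hmξb : Measurable ξb)
    (hlaw : μ.map ξ = volume.withDensity fun x : ℝ =>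
      ENNReal.ofReal
        (if 0 < x then
          2 * Real.Gamma (β / 2) /
              (Real.Gamma ((β - 1) / 2) * Real.sqrt ((β - 1) * Real.pi)) *
            (1 + x ^ 2 / (β - 1)) ^ (-(β / 2))
        else 0))
    (hlawb : μ.map ξb = volume.withDensity fun x : ℝ =>
      ENNReal.ofReal
        (if 0 < x then
          2 * Real.Gamma (βb / 2) /
              (Real.Gamma ((βb - 1) / 2) * Real.sqrt ((βb - 1) * Real.pi)) *
            (1 + x ^ 2 / (βb - 1)) ^ (-(βb / 2))
        else 0))
    (hindep : IndepFun ξ ξb μ) :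
    Integrable (fun ω => (ξ ω) ^ 2) μ ∧ Integrable (fun ω => (ξb ω) ^ 2) μ ∧
      ∃ M : ℝ, ∀ t : ℝ, 0 ≤ t → t ^ α * (μ {ω | t < ξ ω * ξb ω}).toReal ≤ M :=
  folded_t_product_tail_bound_general μ p q α β βb hp hq hα hβ1 hβb1 hβ hβb hpα hqα ξ ξb hmξ hmξb
    hlaw hlawb hindep
end

section
/- Let {ξ_l}_{l∈ℤ} be i.i.d. random variables with E[ξ₁] = 0 and E[ξ₁²] = 1. Let σ ∈ (1/2, 1), set c_0 = 1 and c_l = |l|^{−σ} for l ≠ 0, take T = T(n) = n and define S_n^{(3)} = Σ_{k=1}^n Σ_{l≠m, l−k > T, m−k > T} c_{k−l} c_{k−m} ξ_l ξ_m. Then there is a constant C = C(σ) such that for all n ≥ 1, E[(S_n^{(3)})²] ≤ C n² T^{2−4σ} = C n^{4−4σ}. -/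
/-
Truncated at level `R`, the sum is `∑_{k=1}^n Q_k` with
`Q_k = ∑_{l ≠ m} c_{k-l} c_{k-m} ξ_l ξ_m` over `l, m ∈ [k + n + 1, R]`. The products
`ξ_l ξ_m` (`l ≠ m`) are orthonormal in `L²` up to the symmetry `ξ_l ξ_m = ξ_m ξ_l`, so
`E[Q_k²] = 2 ∑_{l ≠ m} c_{k-l}² c_{k-m}² ≤ 2 (∑_{j > n} j^{-2σ})² ≤ 2 (n^{1-2σ} / (2σ - 1))²`.
Cauchy–Schwarz over the `n` values of `k` gives `E[(∑_k Q_k)²] ≤ 2 n^{4-4σ} / (2σ - 1)²`,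
and Fatou's lemma passes this bound to the almost sure limit `S_n`.
-/

open MeasureTheory ProbabilityTheory Filter Finset
open scoped Topology

lemma sum_sum_ite_ne_eq_sum_offDiag {ι M : Type*} [DecidableEq ι] [AddCommMonoid M]
    (s : Finset ι) (f : ι → ι → M) :
    ∑ l ∈ s, ∑ m ∈ s, (if l ≠ m then f l m else 0) = ∑ p ∈ s.offDiag, f p.1 p.2 := by
  rw [← sum_product' (f := fun l m => if l ≠ m then f l m else 0), ← sum_filter]
  congr 1
  ext p
  simp [mem_offDiag, and_assoc]

lemma sum_mul_ite_eq_or_swap {ι R : Type*} [DecidableEq ι] [NonAssocSemiring R] {s : Finset ι}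
    (f : ι × ι → R) {p : ι × ι} (hp : p ∈ s.offDiag) :
    ∑ q ∈ s.offDiag, f q * (if q = p ∨ q = p.swap then 1 else 0) = f p + f p.swap := by
  obtain ⟨hp₁, hp₂, hne⟩ := mem_offDiag.1 hp
  have hswap : p.swap ∈ s.offDiag := mem_offDiag.2 ⟨hp₂, hp₁, hne.symm⟩
  have hfilter : s.offDiag.filter (fun q => q = p ∨ q = p.swap) = {p, p.swap} := by
    ext q
    simp only [mem_filter, mem_insert, mem_singleton, and_iff_right_iff_imp]
    rintro (rfl | rfl) <;> assumption
  simp only [mul_ite, mul_one, mul_zero]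
  rw [← sum_filter, hfilter, sum_pair fun h => hne (congrArg Prod.fst h)]

lemma sum_range_rpow_neg_le {s x₀ : ℝ} (hs : 1 < s) (hx₀ : 0 < x₀) (N : ℕ) :
    ∑ i ∈ range N, (x₀ + (i + 1 : ℕ)) ^ (-s) ≤ x₀ ^ (1 - s) / (s - 1) := by
  have hanti : AntitoneOn (fun x : ℝ => x ^ (-s)) (Set.Icc x₀ (x₀ + N)) := fun x hx y _ hxy =>
    Real.rpow_le_rpow_of_nonpos (hx₀.trans_le hx.1) hxy (by linarith)
  have hzero : (0 : ℝ) ∉ Set.uIcc x₀ (x₀ + N) := by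
    rw [Set.uIcc_of_le (le_add_of_nonneg_right N.cast_nonneg)]
    exact fun h => hx₀.not_ge h.1
  calc ∑ i ∈ range N, (x₀ + (i + 1 : ℕ)) ^ (-s)
      ≤ ∫ x in x₀..x₀ + N, x ^ (-s) := hanti.sum_le_integral
    _ = (x₀ ^ (1 - s) - (x₀ + N) ^ (1 - s)) / (s - 1) := by
      rw [integral_rpow (Or.inr ⟨by linarith, hzero⟩), neg_add_eq_sub, ← neg_sub s 1,
        div_neg, ← neg_div, neg_sub]
    _ ≤ x₀ ^ (1 - s) / (s - 1) :=
      div_le_div_of_nonneg_right (sub_le_self _ (Real.rpow_nonneg (by positivity) _))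
        (by linarith)

lemma integral_le_of_ae_tendsto_of_integral_le {α : Type*} [MeasurableSpace α] {μ : Measure α}
    {f : ℕ → α → ℝ} {F : α → ℝ} {B : ℝ} (hf_nonneg : ∀ n ω, 0 ≤ f n ω)
    (hf : ∀ n, Integrable (f n) μ) (hlim : ∀ᵐ ω ∂μ, Tendsto (fun n => f n ω) atTop (𝓝 (F ω)))
    (hB : ∀ n, ∫ ω, f n ω ∂μ ≤ B) : ∫ ω, F ω ∂μ ≤ B := by
  have hB₀ : 0 ≤ B := (integral_nonneg (hf_nonneg 0)).trans (hB 0)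
  have hF_nonneg : 0 ≤ᵐ[μ] F := by
    filter_upwards [hlim] with ω hω using ge_of_tendsto' hω (hf_nonneg · ω)
  have hF_meas : AEMeasurable F μ :=
    aemeasurable_of_tendsto_metrizable_ae' (fun n => (hf n).aemeasurable) hlim
  rw [integral_eq_lintegral_of_nonneg_ae hF_nonneg hF_meas.aestronglyMeasurable]
  refine ENNReal.toReal_le_of_le_ofReal hB₀ ?_
  calc ∫⁻ ω, ENNReal.ofReal (F ω) ∂μ
      = ∫⁻ ω, liminf (fun n => ENNReal.ofReal (f n ω)) atTop ∂μ := by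
        refine lintegral_congr_ae ?_
        filter_upwards [hlim] with ω hω
        exact ((ENNReal.continuous_ofReal.tendsto _).comp hω).liminf_eq.symm
    _ ≤ liminf (fun n => ∫⁻ ω, ENNReal.ofReal (f n ω) ∂μ) atTop :=
        lintegral_liminf_le' fun n => (hf n).aemeasurable.ennreal_ofReal
    _ ≤ ENNReal.ofReal B := by
        refine liminf_le_of_frequently_le' (Frequently.of_forall fun n => ?_)
        rw [← ofReal_integral_eq_lintegral_ofReal (hf n) (ae_of_all _ (hf_nonneg n))]
        exact ENNReal.ofReal_le_ofReal (hB n)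

lemma integral_sq_sum_le {κ Ω : Type*} [MeasurableSpace Ω] {μ : Measure Ω} (K : Finset κ)
    {Q : κ → Ω → ℝ} {b : ℝ} (hQ : ∀ k ∈ K, MemLp (Q k) 2 μ)
    (hb : ∀ k ∈ K, ∫ ω, Q k ω ^ 2 ∂μ ≤ b) :
    ∫ ω, (∑ k ∈ K, Q k ω) ^ 2 ∂μ ≤ #K ^ 2 * b := by
  have hint : ∀ k ∈ K, Integrable (fun ω => Q k ω ^ 2) μ := fun k hk => (hQ k hk).integrable_sq
  calc ∫ ω, (∑ k ∈ K, Q k ω) ^ 2 ∂μ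
      ≤ ∫ ω, #K * ∑ k ∈ K, Q k ω ^ 2 ∂μ :=
        integral_mono_of_nonneg (ae_of_all _ fun _ => sq_nonneg _)
          ((integrable_finsetSum _ hint).const_mul _)
          (ae_of_all _ fun _ => sq_sum_le_card_mul_sum_sq)
    _ = #K * ∑ k ∈ K, ∫ ω, Q k ω ^ 2 ∂μ := by rw [integral_const_mul, integral_finsetSum _ hint]
    _ ≤ #K * ∑ k ∈ K, b := by gcongr with k hk; exact hb k hk
    _ = #K ^ 2 * b := by rw [sum_const, nsmul_eq_mul]; ring

section Moments

variable {ι Ω : Type*} [MeasurableSpace Ω] {μ : Measure Ω} {ξ : ι → Ω → ℝ}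

theorem ProbabilityTheory.iIndepFun.indepFun_mul_mul_of_ne (hindep : iIndepFun ξ μ)
    (hmeas : ∀ i, Measurable (ξ i)) {i j k l : ι} (hij : i ≠ j) (hik : i ≠ k) (hil : i ≠ l) :
    IndepFun (ξ i) (fun ω => ξ j ω * ξ k ω * ξ l ω) μ := by
  classical
  have hdisj : Disjoint ({i} : Finset ι) {j, k, l} := by simp [hij, hik, hil]
  refine (hindep.indepFun_finset _ _ hdisj hmeas).comp
    (φ := fun x => x ⟨i, mem_singleton_self i⟩)
    (ψ := fun x => x ⟨j, by simp⟩ * x ⟨k, by simp⟩ * x ⟨l, by simp⟩) ?_ ?_ <;> fun_prop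

lemma integral_sq_mul_sq_of_ne (hindep : iIndepFun ξ μ) (hmeas : ∀ i, Measurable (ξ i))
    {i j : ι} (hij : i ≠ j) :
    ∫ ω, ξ i ω ^ 2 * ξ j ω ^ 2 ∂μ = (∫ ω, ξ i ω ^ 2 ∂μ) * ∫ ω, ξ j ω ^ 2 ∂μ :=
  ((hindep.indepFun hij).comp (φ := (· ^ 2)) (ψ := (· ^ 2)) (by fun_prop) (by fun_prop)
    ).integral_fun_mul_eq_mul_integral ((hmeas i).pow_const 2).aestronglyMeasurable
      ((hmeas j).pow_const 2).aestronglyMeasurable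

lemma memLp_two_mul_of_ne (hindep : iIndepFun ξ μ) (hmeas : ∀ i, Measurable (ξ i))
    (hsq : ∀ i, Integrable (fun ω => ξ i ω ^ 2) μ) {i j : ι} (hij : i ≠ j) :
    MemLp (fun ω => ξ i ω * ξ j ω) 2 μ := by
  refine (memLp_two_iff_integrable_sq (by fun_prop)).2 ?_
  simp_rw [mul_pow]
  exact ((hindep.indepFun hij).comp (φ := (· ^ 2)) (ψ := (· ^ 2)) (by fun_prop)
    (by fun_prop)).integrable_mul (hsq i) (hsq j)

lemma integral_mul_mul_offDiag [DecidableEq ι] (hindep : iIndepFun ξ μ)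
    (hmeas : ∀ i, Measurable (ξ i))
    (hmean : ∀ i, ∫ ω, ξ i ω ∂μ = 0) (hvar : ∀ i, ∫ ω, ξ i ω ^ 2 ∂μ = 1)
    {p q : ι × ι} (hp : p.1 ≠ p.2) (hq : q.1 ≠ q.2) :
    ∫ ω, ξ p.1 ω * ξ p.2 ω * (ξ q.1 ω * ξ q.2 ω) ∂μ = if q = p ∨ q = p.swap then 1 else 0 := by
  obtain ⟨l, m⟩ := p
  obtain ⟨l', m'⟩ := q
  dsimp only at hp hq ⊢
  have hsingle : ∀ {i j k h : ι}, i ≠ j → i ≠ k → i ≠ h →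
      ∫ ω, ξ i ω * (ξ j ω * ξ k ω * ξ h ω) ∂μ = 0 := fun hij hik hih => by
    rw [(hindep.indepFun_mul_mul_of_ne hmeas hij hik hih).integral_fun_mul_eq_mul_integral
      (hmeas _).aestronglyMeasurable (by fun_prop), hmean, zero_mul]
  split_ifs with h
  · calc _ = ∫ ω, ξ l ω ^ 2 * ξ m ω ^ 2 ∂μ := by
          congr 1 with ω
          obtain h | h := h <;> simp only [Prod.mk.injEq, Prod.swap_prod_mk] at h <;>
            obtain ⟨rfl, rfl⟩ := h <;> ring
      _ = 1 := by rw [integral_sq_mul_sq_of_ne hindep hmeas hp, hvar, hvar, one_mul]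
  · -- `{l', m'} ≠ {l, m}`, so `l` or `m` occurs only once among the four indices
    simp only [Prod.mk.injEq, Prod.swap_prod_mk, not_or, not_and] at h
    by_cases hl : l ≠ l' ∧ l ≠ m'
    · rw [← hsingle hp hl.1 hl.2]
      congr 1 with ω
      ring
    · have hm : m ≠ l' ∧ m ≠ m' := by grind
      rw [← hsingle hp.symm hm.1 hm.2]
      congr 1 with ω
      ring

lemma memLp_two_sum_offDiag (hindep : iIndepFun ξ μ) (hmeas : ∀ i, Measurable (ξ i))
    (hsq : ∀ i, Integrable (fun ω => ξ i ω ^ 2) μ) (s : Finset ι) (w : ι × ι → ℝ) :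
    MemLp (fun ω => ∑ p ∈ s.offDiag, w p * (ξ p.1 ω * ξ p.2 ω)) 2 μ :=
  memLp_finsetSum _ fun p hp =>
    (memLp_two_mul_of_ne hindep hmeas hsq (mem_offDiag.1 hp).2.2).const_mul (w p)

lemma integral_sq_sum_offDiag [DecidableEq ι] (hindep : iIndepFun ξ μ)
    (hmeas : ∀ i, Measurable (ξ i))
    (hmean : ∀ i, ∫ ω, ξ i ω ∂μ = 0) (hvar : ∀ i, ∫ ω, ξ i ω ^ 2 ∂μ = 1)
    (s : Finset ι) {w : ι × ι → ℝ} (hw : ∀ p, w p.swap = w p) :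
    ∫ ω, (∑ p ∈ s.offDiag, w p * (ξ p.1 ω * ξ p.2 ω)) ^ 2 ∂μ = 2 * ∑ p ∈ s.offDiag, w p ^ 2 := by
  have hsq (i : ι) : Integrable (fun ω => ξ i ω ^ 2) μ :=
    .of_integral_ne_zero (by rw [hvar]; exact one_ne_zero)
  have hint : ∀ p ∈ s.offDiag, ∀ q ∈ s.offDiag,
      Integrable (fun ω => w p * w q * (ξ p.1 ω * ξ p.2 ω * (ξ q.1 ω * ξ q.2 ω))) μ :=
    fun p hp q hq => ((memLp_two_mul_of_ne hindep hmeas hsq (mem_offDiag.1 hp).2.2).integrable_mul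
      (memLp_two_mul_of_ne hindep hmeas hsq (mem_offDiag.1 hq).2.2)).const_mul _
  calc ∫ ω, (∑ p ∈ s.offDiag, w p * (ξ p.1 ω * ξ p.2 ω)) ^ 2 ∂μ
      = ∫ ω, ∑ p ∈ s.offDiag, ∑ q ∈ s.offDiag,
          w p * w q * (ξ p.1 ω * ξ p.2 ω * (ξ q.1 ω * ξ q.2 ω)) ∂μ := by
        simp_rw [sq, sum_mul_sum, mul_mul_mul_comm]
    _ = ∑ p ∈ s.offDiag, ∑ q ∈ s.offDiag, w p * w q * (if q = p ∨ q = p.swap then 1 else 0) := by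
        rw [integral_finsetSum _ fun p hp => integrable_finsetSum _ (hint p hp)]
        refine sum_congr rfl fun p hp => ?_
        rw [integral_finsetSum _ (hint p hp)]
        refine sum_congr rfl fun q hq => ?_
        rw [integral_const_mul, integral_mul_mul_offDiag hindep hmeas hmean hvar
          (mem_offDiag.1 hp).2.2 (mem_offDiag.1 hq).2.2]
    _ = 2 * ∑ p ∈ s.offDiag, w p ^ 2 := by
        rw [mul_sum]
        refine sum_congr rfl fun p hp => ?_
        simp_rw [mul_assoc (w p)]
        rw [← mul_sum, sum_mul_ite_eq_or_swap _ hp, hw]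
        ring

lemma integral_sq_sum_offDiag_mul_le [DecidableEq ι] (hindep : iIndepFun ξ μ)
    (hmeas : ∀ i, Measurable (ξ i))
    (hmean : ∀ i, ∫ ω, ξ i ω ∂μ = 0) (hvar : ∀ i, ∫ ω, ξ i ω ^ 2 ∂μ = 1)
    (s : Finset ι) (a : ι → ℝ) :
    ∫ ω, (∑ p ∈ s.offDiag, a p.1 * a p.2 * (ξ p.1 ω * ξ p.2 ω)) ^ 2 ∂μ
      ≤ 2 * (∑ i ∈ s, a i ^ 2) ^ 2 := by
  rw [integral_sq_sum_offDiag hindep hmeas hmean hvar s (w := fun p => a p.1 * a p.2)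
    fun p => mul_comm _ _, sq (∑ i ∈ s, a i ^ 2), sum_mul_sum, ← sum_product']
  gcongr 2 * ?_
  rw [← product_sdiff_diag]
  refine (sum_le_sum_of_subset_of_nonneg sdiff_subset fun p _ _ => sq_nonneg _).trans_eq ?_
  simp_rw [mul_pow]

end Moments

lemma sum_sq_coeff_tail_le {c : ℤ → ℝ} {σ : ℝ} (hσ : 1 / 2 < σ)
    (hcl : ∀ l : ℤ, l ≠ 0 → c l = |(l : ℝ)| ^ (-σ)) (k : ℤ) {n : ℕ} (hn : 0 < n) (M : ℤ) :
    ∑ l ∈ Icc (k + n + 1) M, c (k - l) ^ 2 ≤ (n : ℝ) ^ (1 - 2 * σ) / (2 * σ - 1) := by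
  rw [Int.Icc_eq_finset_map, sum_map]
  convert sum_range_rpow_neg_le (s := 2 * σ) (by linarith) (Nat.cast_pos.2 hn) _ using 2 with i
  have hshift : ((k - (k + n + 1 + i) : ℤ) : ℝ) = -(n + (i + 1 : ℕ)) := by push_cast; ring
  simp only [Function.Embedding.trans_apply, Nat.castEmbedding_apply, addLeftEmbedding_apply]
  rw [hcl _ (by omega), hshift, abs_neg, abs_of_pos (by positivity), ← Real.rpow_natCast,
    ← Real.rpow_mul (by positivity)]
  congr 1
  push_cast
  ring

theorem small_coefficient_offdiagonal_second_moment_bound_general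
    {Ω : Type*} [MeasurableSpace Ω] (μ : Measure Ω)
    (ξ : ℤ → Ω → ℝ)
    (hmeas : ∀ l, Measurable (ξ l))
    (hindep : iIndepFun ξ μ)
    (hident : ∀ l : ℤ, IdentDistrib (ξ l) (ξ 1) μ μ)
    (hmean : ∫ ω, ξ 1 ω ∂μ = 0)
    (hvar : ∫ ω, (ξ 1 ω) ^ 2 ∂μ = 1)
    (σ : ℝ) (hσ : σ ∈ Set.Ioo (1 / 2 : ℝ) 1)
    (c : ℤ → ℝ) (hcl : ∀ l : ℤ, l ≠ 0 → c l = |(l : ℝ)| ^ (-σ))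
    (S : ℕ → Ω → ℝ)
    (hS : ∀ n : ℕ, ∀ᵐ ω ∂μ,
      Tendsto
        (fun R : ℕ =>
          ∑ k ∈ Finset.Icc (1 : ℤ) (n : ℤ),
            ∑ l ∈ Finset.Icc (k + (n : ℤ) + 1) (R : ℤ),
              ∑ m ∈ Finset.Icc (k + (n : ℤ) + 1) (R : ℤ),
                if l ≠ m then c (k - l) * c (k - m) * ξ l ω * ξ m ω else 0)
        atTop (𝓝 (S n ω))) :
    ∃ C : ℝ, ∀ n : ℕ, 1 ≤ n →
      ∫ ω, (S n ω) ^ 2 ∂μ ≤ C * (n : ℝ) ^ (4 - 4 * σ) := by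
  obtain ⟨hσ₁, -⟩ := hσ
  have hmean' (i : ℤ) : ∫ ω, ξ i ω ∂μ = 0 := (hident i).integral_eq.trans hmean
  have hvar' (i : ℤ) : ∫ ω, ξ i ω ^ 2 ∂μ = 1 :=
    ((hident i).comp (measurable_id.pow_const 2)).integral_eq.trans hvar
  have hsq (i : ℤ) : Integrable (fun ω => ξ i ω ^ 2) μ :=
    .of_integral_ne_zero (by rw [hvar']; exact one_ne_zero)
  refine ⟨2 / (2 * σ - 1) ^ 2, fun n hn => ?_⟩
  set B : ℝ := (n : ℝ) ^ (1 - 2 * σ) / (2 * σ - 1) with hB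
  let Q (R : ℕ) (k : ℤ) (ω : Ω) : ℝ := ∑ p ∈ (Icc (k + n + 1) (R : ℤ)).offDiag,
    c (k - p.1) * c (k - p.2) * (ξ p.1 ω * ξ p.2 ω)
  have hQ (R : ℕ) (k : ℤ) : ∫ ω, Q R k ω ^ 2 ∂μ ≤ 2 * B ^ 2 := by
    refine (integral_sq_sum_offDiag_mul_le hindep hmeas hmean' hvar' (Icc (k + n + 1) R)
      (fun l => c (k - l))).trans ?_
    gcongr
    exact sum_sq_coeff_tail_le hσ₁ hcl k hn _
  have htrunc (R : ℕ) : ∫ ω, (∑ k ∈ Icc (1 : ℤ) n, Q R k ω) ^ 2 ∂μ ≤ n ^ 2 * (2 * B ^ 2) := by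
    convert integral_sq_sum_le (Icc (1 : ℤ) n)
      (fun k _ => memLp_two_sum_offDiag hindep hmeas hsq _ _) (fun k _ => hQ R k) using 3
    simp
  have hlim : ∀ᵐ ω ∂μ, Tendsto (fun R => (∑ k ∈ Icc (1 : ℤ) n, Q R k ω) ^ 2) atTop
      (𝓝 (S n ω ^ 2)) := by
    filter_upwards [hS n] with ω hω
    simp_rw [mul_assoc _ (ξ _ ω), sum_sum_ite_ne_eq_sum_offDiag] at hω
    exact hω.pow 2
  calc ∫ ω, S n ω ^ 2 ∂μ ≤ n ^ 2 * (2 * B ^ 2) :=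
        integral_le_of_ae_tendsto_of_integral_le (fun _ _ => sq_nonneg _)
          (fun R => (memLp_finsetSum _ fun k _ =>
            memLp_two_sum_offDiag hindep hmeas hsq _ _).integrable_sq) hlim htrunc
    _ = 2 / (2 * σ - 1) ^ 2 * (n : ℝ) ^ (4 - 4 * σ) := by
        have hpow : (n : ℝ) ^ (4 - 4 * σ) = (n : ℝ) ^ 2 * ((n : ℝ) ^ (1 - 2 * σ)) ^ 2 := by
          rw [← Real.rpow_mul_natCast n.cast_nonneg, ← Real.rpow_natCast,
            ← Real.rpow_add (by positivity)]
          ring_nf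
        rw [hpow, hB, div_pow]
        ring

/-- **Second-moment bound for the 'small coefficient' off-diagonal partial sums
`S_n^{(3)}`** (Step 7 of Theorem `longonly`, with `T = n`).  `{ξ_l}` are i.i.d.
with mean `0` and variance `1`; `c_0 = 1`, `c_l = |l|^{-σ}` for `l ≠ 0`,
`σ ∈ (1/2, 1)`.  `S_n^{(3)} = Σ_{k=1}^n Σ_{l≠m, l,m > k+T} c_{k-l} c_{k-m} ξ_l ξ_m`
is realized as the a.s. limit of its truncations.  Then there is a constant
`C = C(σ)` with `E[(S_n^{(3)})²] ≤ C n² T^{2-4σ} = C n^{4-4σ}` for all `n ≥ 1`. -/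
theorem small_coefficient_offdiagonal_second_moment_bound
    {Ω : Type*} [MeasurableSpace Ω] (μ : Measure Ω) [IsProbabilityMeasure μ]
    (ξ : ℤ → Ω → ℝ)
    (hmeas : ∀ l, Measurable (ξ l))
    (hindep : iIndepFun ξ μ)
    (hident : ∀ l : ℤ, IdentDistrib (ξ l) (ξ 1) μ μ)
    (hmean : ∫ ω, ξ 1 ω ∂μ = 0)
    (hvar : ∫ ω, (ξ 1 ω) ^ 2 ∂μ = 1)
    (σ : ℝ) (hσ : σ ∈ Set.Ioo (1 / 2 : ℝ) 1)
    (c : ℤ → ℝ) (hc0 : c 0 = 1) (hcl : ∀ l : ℤ, l ≠ 0 → c l = |(l : ℝ)| ^ (-σ))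
    (S : ℕ → Ω → ℝ)
    (hS : ∀ n : ℕ, ∀ᵐ ω ∂μ,
      Tendsto
        (fun R : ℕ =>
          ∑ k ∈ Finset.Icc (1 : ℤ) (n : ℤ),
            ∑ l ∈ Finset.Icc (k + (n : ℤ) + 1) (R : ℤ),
              ∑ m ∈ Finset.Icc (k + (n : ℤ) + 1) (R : ℤ),
                if l ≠ m then c (k - l) * c (k - m) * ξ l ω * ξ m ω else 0)
        atTop (𝓝 (S n ω))) :
    ∃ C : ℝ, ∀ n : ℕ, 1 ≤ n →
      ∫ ω, (S n ω) ^ 2 ∂μ ≤ C * (n : ℝ) ^ (4 - 4 * σ) :=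
  small_coefficient_offdiagonal_second_moment_bound_general μ ξ hmeas hindep hident hmean hvar σ hσ
    c hcl S hS
end
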